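/- Let Λ < 0, ε ∈ ℝ, and let a, b be positive twice differentiable functions on an interval I satisfying only the two evolution equations b'' = −(b')²/b − |Λ|b − ε/b − a'b'/a and a'' = −|Λ|a − 2a'b'/b. Define the constraint quantity C(t) := |Λ| + ε/b(t)² + b'(t)²/b(t)² + 2·b'(t)a'(t)/(b(t)a(t)). Then C is differentiable on I and satisfies C'(t) = −2·(a'(t)/a(t) + 2·b'(t)/b(t))·C(t) for all t ∈ I. In particular, if C vanishes at one point of I then C vanishes identically on I (propagation of the Hamiltonian constraint). -/

import Mathlib

open Set

/-!
Differentiating `C` and substituting the two evolution equations for `a''` and `b''`, every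
term of `C'` recombines into `-2 (a'/a + 2b'/b) C`. Since `(a² b⁴)' = 2 (a'/a + 2b'/b) a² b⁴`,
the function `a² b⁴ C` then has derivative zero, so it is constant on the interval; as `a² b⁴`
never vanishes there, `C` vanishes everywhere as soon as it vanishes somewhere.
-/

/-- Here `L` stands for `|Λ|`, and `a'`, `b'` for the derivatives of `a`, `b`. -/
noncomputable def hamiltonianConstraint (L ε : ℝ) (a b a' b' : ℝ → ℝ) (t : ℝ) : ℝ :=
  L + ε / (b t) ^ 2 + (b' t) ^ 2 / (b t) ^ 2 + 2 * b' t * a' t / (b t * a t)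

theorem hasDerivAt_hamiltonianConstraint {L ε t : ℝ} {a b a' b' : ℝ → ℝ}
    (ha : HasDerivAt a (a' t) t) (hb : HasDerivAt b (b' t) t)
    (ha' : HasDerivAt a' (-L * a t - 2 * a' t * b' t / b t) t)
    (hb' : HasDerivAt b' (-(b' t) ^ 2 / b t - L * b t - ε / b t - a' t * b' t / a t) t)
    (ha0 : a t ≠ 0) (hb0 : b t ≠ 0) :
    HasDerivAt (hamiltonianConstraint L ε a b a' b')
      (-2 * (a' t / a t + 2 * b' t / b t) * hamiltonianConstraint L ε a b a' b' t) t := by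
  have hε := (hasDerivAt_const t ε).div (hb.pow 2) (pow_ne_zero 2 hb0)
  have hkin := (hb'.pow 2).div (hb.pow 2) (pow_ne_zero 2 hb0)
  have hmixed := ((hb'.const_mul 2).mul ha').div (hb.mul ha) (mul_ne_zero hb0 ha0)
  refine ((((hasDerivAt_const t L).add hε).add hkin).add hmixed).congr_deriv ?_
  simp only [hamiltonianConstraint, Pi.mul_apply, Pi.pow_apply]
  field_simp
  ring

theorem hasDerivAt_sq_mul_pow_four {a b : ℝ → ℝ} {a' b' t : ℝ}
    (ha : HasDerivAt a a' t) (hb : HasDerivAt b b' t) (ha0 : a t ≠ 0) (hb0 : b t ≠ 0) :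
    HasDerivAt (fun s => a s ^ 2 * b s ^ 4)
      (2 * (a' / a t + 2 * b' / b t) * (a t ^ 2 * b t ^ 4)) t := by
  refine ((ha.pow 2).mul (hb.pow 4)).congr_deriv ?_
  simp only [Pi.pow_apply]
  field_simp
  ring

theorem eqOn_zero_of_hasDerivAt_mul_self {s : Set ℝ} (hs : IsOpen s) (hs' : IsPreconnected s)
    {C k μ : ℝ → ℝ} (hC : ∀ t ∈ s, HasDerivAt C (k t * C t) t)
    (hμ : ∀ t ∈ s, HasDerivAt μ (-k t * μ t) t) (hμ0 : ∀ t ∈ s, μ t ≠ 0)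
    {t₀ : ℝ} (ht₀ : t₀ ∈ s) (hCt₀ : C t₀ = 0) : EqOn C 0 s := by
  have hderiv : ∀ t ∈ s, HasDerivAt (μ * C) 0 t := fun t ht =>
    ((hμ t ht).mul (hC t ht)).congr_deriv (by ring)
  intro t ht
  have hconst : (μ * C) t = (μ * C) t₀ :=
    hs.is_const_of_deriv_eq_zero hs'
      (fun x hx => (hderiv x hx).differentiableAt.differentiableWithinAt)
      (fun x hx => (hderiv x hx).deriv) ht ht₀
  simpa [hCt₀, hμ0 t ht] using hconst

theorem constraint_propagation (Λ : ℝ) (ε α β : ℝ) (a b C : ℝ → ℝ)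
    (hpos : ∀ t ∈ Set.Ioo α β, 0 < a t ∧ 0 < b t)
    (ha : ∀ t ∈ Set.Ioo α β, HasDerivAt a (deriv a t) t)
    (hb : ∀ t ∈ Set.Ioo α β, HasDerivAt b (deriv b t) t)
    (ha'' : ∀ t ∈ Set.Ioo α β, HasDerivAt (deriv a)
      (-|Λ| * a t - 2 * deriv a t * deriv b t / b t) t)
    (hb'' : ∀ t ∈ Set.Ioo α β, HasDerivAt (deriv b)
      (-(deriv b t) ^ 2 / b t - |Λ| * b t - ε / b t - deriv a t * deriv b t / a t) t)
    (hC : C = fun t => |Λ| + ε / (b t) ^ 2 + (deriv b t) ^ 2 / (b t) ^ 2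
      + 2 * deriv b t * deriv a t / (b t * a t)) :
    (∀ t ∈ Set.Ioo α β, HasDerivAt C
      (-2 * (deriv a t / a t + 2 * deriv b t / b t) * C t) t) ∧
    (∀ t₀ ∈ Set.Ioo α β, C t₀ = 0 → ∀ t ∈ Set.Ioo α β, C t = 0) := by
  have hC' : C = hamiltonianConstraint |Λ| ε a b (deriv a) (deriv b) := hC
  subst hC'
  have hderiv := fun t (ht : t ∈ Ioo α β) =>
    hasDerivAt_hamiltonianConstraint (ha t ht) (hb t ht) (ha'' t ht) (hb'' t ht)
      (hpos t ht).1.ne' (hpos t ht).2.ne'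
  refine ⟨hderiv, fun t₀ ht₀ hCt₀ => ?_⟩
  refine eqOn_zero_of_hasDerivAt_mul_self isOpen_Ioo isPreconnected_Ioo hderiv
    (μ := fun s => a s ^ 2 * b s ^ 4) (fun t ht => ?_) (fun t ht => ?_) ht₀ hCt₀
  · exact (hasDerivAt_sq_mul_pow_four (ha t ht) (hb t ht) (hpos t ht).1.ne'
      (hpos t ht).2.ne').congr_deriv (by ring)
  · exact mul_ne_zero (pow_ne_zero 2 (hpos t ht).1.ne') (pow_ne_zero 4 (hpos t ht).2.ne')
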